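/- arXiv:1208.0692 — 4 statements merged into one kernel-verified Lean document; each statement's English description precedes it below -/
import Mathlib

section
/- For any two orthogonal projectors Q and R on a finite-dimensional Hilbert space, the operator norm of Q + R is at most 1 plus the operator norm of QR. -/
/-!
For orthogonal projectors `p`, `q` and `t = ‖(p + q) x‖`, self-adjointness and idempotency give
`‖p x‖² + ‖q x‖² = re ⟪(p + q) x, x⟫ ≤ t ‖x‖`, and `⟪p x, q x⟫ = ⟪p x, p q (q x)⟫` bounds the cross
term of `t² = ‖p x‖² + ‖q x‖² + 2 re ⟪p x, q x⟫` by `‖p q‖ (‖p x‖² + ‖q x‖²)`.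
Hence `t² ≤ (1 + ‖p q‖) t ‖x‖`.
-/

open Matrix

/-- The operator norm (largest singular value) of a square complex matrix. -/
noncomputable def opNorm {ι : Type*} [Fintype ι] [DecidableEq ι] (A : Matrix ι ι ℂ) : ℝ :=
  ‖Matrix.toEuclideanCLM (𝕜 := ℂ) A‖

namespace IsStarProjection

open RCLike ContinuousLinearMap
open scoped InnerProductSpace

variable {𝕜 E : Type*} [RCLike 𝕜] [NormedAddCommGroup E] [InnerProductSpace 𝕜 E] [CompleteSpace E]
  {p q : E →L[𝕜] E}

theorem apply_apply (hp : IsStarProjection p) (x : E) : p (p x) = p x := by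
  rw [← mul_apply_eq_comp, hp.isIdempotentElem.eq]

theorem inner_apply_eq_inner_apply_apply (hp : IsStarProjection p) (x y : E) :
    ⟪p x, y⟫_𝕜 = ⟪p x, p y⟫_𝕜 := by
  conv_lhs => rw [← hp.apply_apply x]
  exact hp.isSelfAdjoint.isSymmetric _ _

theorem re_inner_apply_self (hp : IsStarProjection p) (x : E) : re ⟪p x, x⟫_𝕜 = ‖p x‖ ^ 2 := by
  rw [hp.inner_apply_eq_inner_apply_apply, inner_self_eq_norm_sq]

theorem norm_sq_add_norm_sq_le (hp : IsStarProjection p) (hq : IsStarProjection q) (x : E) :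
    ‖p x‖ ^ 2 + ‖q x‖ ^ 2 ≤ ‖(p + q) x‖ * ‖x‖ := by
  rw [← hp.re_inner_apply_self, ← hq.re_inner_apply_self, ← map_add, ← inner_add_left]
  exact re_inner_le_norm _ _

theorem re_inner_apply_le (hp : IsStarProjection p) (hq : IsStarProjection q) (x : E) :
    re ⟪p x, q x⟫_𝕜 ≤ ‖p * q‖ * (‖p x‖ * ‖q x‖) := by
  have hpq : ⟪p x, q x⟫_𝕜 = ⟪p x, (p * q) (q x)⟫_𝕜 := by
    rw [hp.inner_apply_eq_inner_apply_apply, mul_apply_eq_comp, hq.apply_apply]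
  calc re ⟪p x, q x⟫_𝕜 ≤ ‖p x‖ * ‖(p * q) (q x)‖ := hpq ▸ re_inner_le_norm _ _
    _ ≤ ‖p x‖ * (‖p * q‖ * ‖q x‖) := by gcongr; exact le_opNorm _ _
    _ = ‖p * q‖ * (‖p x‖ * ‖q x‖) := by ring

theorem norm_add_apply_sq_le (hp : IsStarProjection p) (hq : IsStarProjection q) (x : E) :
    ‖(p + q) x‖ ^ 2 ≤ (1 + ‖p * q‖) * (‖p x‖ ^ 2 + ‖q x‖ ^ 2) := by
  rw [_root_.add_apply, @norm_add_sq 𝕜]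
  nlinarith [hp.re_inner_apply_le hq x, sq_nonneg (‖p x‖ - ‖q x‖), norm_nonneg (p * q)]

theorem norm_add_le_one_add_norm_mul (hp : IsStarProjection p) (hq : IsStarProjection q) :
    ‖p + q‖ ≤ 1 + ‖p * q‖ := by
  refine opNorm_le_bound _ (by positivity) fun x => ?_
  have h := (hp.norm_add_apply_sq_le hq x).trans
    (mul_le_mul_of_nonneg_left (hp.norm_sq_add_norm_sq_le hq x) (by positivity))
  rcases (norm_nonneg ((p + q) x)).eq_or_lt with h0 | hpos
  · rw [← h0]
    positivity
  · refine le_of_mul_le_mul_left ?_ hpos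
    linarith

end IsStarProjection

/-- For any two orthogonal projectors `Q` and `R` on a finite-dimensional Hilbert space,
`‖Q + R‖_∞ ≤ 1 + ‖Q R‖_∞`. -/
theorem projector_sum_norm_le {N : ℕ} (Q R : Matrix (Fin N) (Fin N) ℂ)
    (hQherm : Qᴴ = Q) (hQidem : Q * Q = Q)
    (hRherm : Rᴴ = R) (hRidem : R * R = R) :
    opNorm (Q + R) ≤ 1 + opNorm (Q * R) := by
  have hQ : IsStarProjection (toEuclideanCLM (𝕜 := ℂ) Q) :=
    IsStarProjection.map ⟨hQidem, hQherm⟩ _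
  have hR : IsStarProjection (toEuclideanCLM (𝕜 := ℂ) R) :=
    IsStarProjection.map ⟨hRidem, hRherm⟩ _
  rw [opNorm, opNorm, map_add, map_mul]
  exact hQ.norm_add_le_one_add_norm_mul hR
end

section
/- Let |ψ_π⟩ := (I ⊗ V(π))|Φ⟩ where |Φ⟩ is the maximally entangled state on (ℂ^{d^n})^{⊗t} ⊗ (ℂ^{d^n})^{⊗t} and V(π) is the permutation representation of π ∈ S_t on (ℂ^{d^n})^{⊗t}. Then for every σ ∈ S_t, ∑_{π∈S_t} |⟨ψ_σ|ψ_π⟩| = t!·dim(∨^t ℂ^{d^n})/d^{tn}, and if t² ≤ d^n this sum is at most 1 + t²/d^n. -/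
open Matrix

/-- The symmetric subspace `∨^t ℂ^M` of `(ℂ^M)^{⊗t}`. -/
noncomputable def symSubspace (M t : ℕ) : Submodule ℂ ((Fin t → Fin M) → ℂ) where
  carrier := {v | ∀ (π : Equiv.Perm (Fin t)) (x : Fin t → Fin M), v (x ∘ π) = v x}
  add_mem' := by
    intro a b ha hb π x
    simp [ha π x, hb π x]
  zero_mem' := by
    intro π x
    rfl
  smul_mem' := by
    intro c a ha π x
    simp [ha π x]

/-- The state `|ψ_π⟩ = (I ⊗ V(π))|Φ⟩` on `(ℂ^{d^n})^{⊗t} ⊗ (ℂ^{d^n})^{⊗t}`, where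
`|Φ⟩ = d^{−tn/2}∑_k |k,k⟩` is the maximally entangled state and `V(π)` permutes the
`t` tensor factors.  Componentwise, `ψ_π(x,y) = d^{−tn/2}` if `y = x ∘ π⁻¹`, else `0`. -/
noncomputable def psiPerm (d n t : ℕ) (π : Equiv.Perm (Fin t)) :
    (Fin t → Fin (d ^ n)) × (Fin t → Fin (d ^ n)) → ℂ :=
  fun p => if p.2 = p.1 ∘ ⇑(π⁻¹) then ((Real.sqrt ((d : ℝ) ^ (t * n)) : ℝ) : ℂ)⁻¹ else 0

/-!
The overlap `⟨ψ_σ|ψ_π⟩` is `d^{-tn}` times the number of tuples `x : Fin t → Fin (d^n)` with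
`x ∘ π⁻¹ = x ∘ σ⁻¹`, i.e. of fixed points of `σ⁻¹π` acting on tuples by permuting positions.
Summed over `π`, Burnside's lemma turns this into `t!` times the number of orbits, and the orbits
are the multisets of size `t` drawn from `d^n` values. Their number `multichoose (d^n) t` is the
dimension of the symmetric subspace, and `t! · multichoose m t = m (m+1) ⋯ (m+t-1)`, which is
at most `m^t (1 + t²/m)` once `t² ≤ m`.
-/

open MulAction ComplexConjugate

attribute [local instance] arrowAction

namespace Sym

variable {α : Type*} {t : ℕ}

def ofFn (x : Fin t → α) : Sym α t := ⟨List.ofFn x, by simp⟩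

theorem ofFn_comp_perm (x : Fin t → α) (π : Equiv.Perm (Fin t)) : ofFn (x ∘ π) = ofFn x :=
  Subtype.ext <| Quot.sound <| π.ofFn_comp_perm x

theorem ofFn_surjective : Function.Surjective (ofFn : (Fin t → α) → Sym α t) := by
  rintro ⟨s, hs⟩
  induction s using Quotient.inductionOn with
  | h l =>
    have hl : l.length = t := by simpa using hs
    refine ⟨fun i => l[i.cast hl.symm], Subtype.ext ?_⟩
    show ((List.ofFn _ : List α) : Multiset α) = l
    exact congrArg _ (List.ext_getElem (by simp [hl]) fun i _ _ => by simp)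

theorem ofFn_eq_ofFn_iff [LinearOrder α] {x y : Fin t → α} :
    ofFn x = ofFn y ↔ ∃ π : Equiv.Perm (Fin t), x ∘ π = y := by
  refine ⟨fun h => ?_, fun ⟨π, hπ⟩ => hπ ▸ (ofFn_comp_perm x π).symm⟩
  -- Two rearrangements of one list that are both sorted coincide.
  have hsorted : x ∘ Tuple.sort x = y ∘ Tuple.sort y := by
    refine List.ofFn_injective <| List.Perm.eq_of_sortedLE (Tuple.monotone_sort x).sortedLE_ofFn
      (Tuple.monotone_sort y).sortedLE_ofFn ?_
    exact ((Tuple.sort x).ofFn_comp_perm x).trans <|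
      (Quotient.exact (congrArg Subtype.val h)).trans ((Tuple.sort y).ofFn_comp_perm y).symm
  refine ⟨Tuple.sort x * (Tuple.sort y)⁻¹, funext fun i => ?_⟩
  simpa using congrFun hsorted ((Tuple.sort y)⁻¹ i)

end Sym

section TupleOrbits

variable {α : Type*} {t : ℕ}

theorem perm_smul_tuple (π : Equiv.Perm (Fin t)) (x : Fin t → α) : π • x = x ∘ ⇑π⁻¹ :=
  rfl

theorem orbitRel_perm_iff {x y : Fin t → α} :
    orbitRel (Equiv.Perm (Fin t)) (Fin t → α) x y ↔ ∃ π : Equiv.Perm (Fin t), y ∘ π = x :=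
  ⟨fun ⟨g, hg⟩ => ⟨g⁻¹, hg⟩,
    fun ⟨π, hπ⟩ => ⟨π⁻¹, (perm_smul_tuple π⁻¹ y).trans (by rw [inv_inv, hπ])⟩⟩

theorem mem_fixedBy_inv_mul_iff {σ π : Equiv.Perm (Fin t)} {x : Fin t → α} :
    x ∈ fixedBy (Fin t → α) (σ⁻¹ * π) ↔ x ∘ ⇑π⁻¹ = x ∘ ⇑σ⁻¹ := by
  rw [mem_fixedBy, perm_smul_tuple, _root_.mul_inv_rev, inv_inv, Equiv.Perm.coe_mul,
    ← Function.comp_assoc]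
  exact (Equiv.eq_comp_symm σ _ _).symm

variable (α t) in
noncomputable def orbitQuotientEquivSym [LinearOrder α] :
    orbitRel.Quotient (Equiv.Perm (Fin t)) (Fin t → α) ≃ Sym α t :=
  Equiv.ofBijective
    (Quotient.lift Sym.ofFn fun _ _ h => (Sym.ofFn_eq_ofFn_iff.2 (orbitRel_perm_iff.1 h)).symm)
    ⟨Quotient.ind₂ fun _ _ h =>
        Quotient.sound (orbitRel_perm_iff.2 (Sym.ofFn_eq_ofFn_iff.1 h.symm)),
      fun s => (Sym.ofFn_surjective s).imp' (⟦·⟧) fun _ h => h⟩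

theorem card_orbitQuotient_tuple (m t : ℕ) :
    Nat.card (orbitRel.Quotient (Equiv.Perm (Fin t)) (Fin t → Fin m)) = m.multichoose t := by
  classical
  rw [Nat.card_congr (orbitQuotientEquivSym (Fin m) t), Nat.card_eq_fintype_card,
    Sym.card_sym_eq_multichoose, Fintype.card_fin]

end TupleOrbits

noncomputable def symSubspaceEquiv (m t : ℕ) :
    symSubspace m t ≃ₗ[ℂ] (orbitRel.Quotient (Equiv.Perm (Fin t)) (Fin t → Fin m) → ℂ) where
  toFun v := Quotient.lift v.1 fun x y h => by
    obtain ⟨π, rfl⟩ := orbitRel_perm_iff.1 h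
    exact v.2 π y
  map_add' _ _ := funext <| Quotient.ind fun _ => rfl
  map_smul' _ _ := funext <| Quotient.ind fun _ => rfl
  invFun w := ⟨fun x => w ⟦x⟧,
    fun π x => congrArg w <| Quotient.sound <| orbitRel_perm_iff.2 ⟨π, rfl⟩⟩
  left_inv _ := rfl
  right_inv _ := funext <| Quotient.ind fun _ => rfl

theorem finrank_symSubspace (m t : ℕ) :
    Module.finrank ℂ (symSubspace m t) = m.multichoose t := by
  classical
  rw [(symSubspaceEquiv m t).finrank_eq, Module.finrank_fintype_fun_eq_card,
    ← Nat.card_eq_fintype_card, card_orbitQuotient_tuple]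

theorem overlap_psiPerm (d n t : ℕ) (σ π : Equiv.Perm (Fin t)) :
    ∑ p, conj (psiPerm d n t σ p) * psiPerm d n t π p
      = ((Nat.card (fixedBy (Fin t → Fin (d ^ n)) (σ⁻¹ * π)) / (d : ℝ) ^ (t * n) : ℝ) : ℂ) := by
  classical
  have hnorm : conj (((Real.sqrt ((d : ℝ) ^ (t * n)) : ℝ) : ℂ)⁻¹)
      * ((Real.sqrt ((d : ℝ) ^ (t * n)) : ℝ) : ℂ)⁻¹ = (((d : ℝ) ^ (t * n))⁻¹ : ℝ) := by
    rw [map_inv₀, Complex.conj_ofReal, ← mul_inv, ← Complex.ofReal_mul,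
      Real.mul_self_sqrt (by positivity), Complex.ofReal_inv]
  rw [Fintype.sum_prod_type]
  simp only [psiPerm, apply_ite conj, map_zero, ite_mul, zero_mul, mul_ite, mul_zero,
    Finset.sum_ite_eq', Finset.mem_univ, if_true, hnorm, ← mem_fixedBy_inv_mul_iff]
  rw [Finset.sum_ite, Finset.sum_const_zero, add_zero, Finset.sum_const, nsmul_eq_mul,
    Nat.card_eq_fintype_card, Fintype.card_subtype]
  push_cast
  ring

theorem sum_norm_overlap_psiPerm (d n t : ℕ) (σ : Equiv.Perm (Fin t)) :
    ∑ π, ‖∑ p, conj (psiPerm d n t σ p) * psiPerm d n t π p‖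
      = t.factorial * (d ^ n).multichoose t / (d : ℝ) ^ (t * n) := by
  classical
  have burnside : ∑ π : Equiv.Perm (Fin t), Nat.card (fixedBy (Fin t → Fin (d ^ n)) (σ⁻¹ * π))
      = (d ^ n).multichoose t * t.factorial := by
    refine (Equiv.sum_comp (Equiv.mulLeft σ⁻¹)
      fun τ => Nat.card (fixedBy (Fin t → Fin (d ^ n)) τ)).trans ?_
    simp only [Nat.card_eq_fintype_card]
    rw [sum_card_fixedBy_eq_card_orbits_mul_card_group, ← Nat.card_eq_fintype_card,
      card_orbitQuotient_tuple, Fintype.card_perm, Fintype.card_fin]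
  simp only [overlap_psiPerm, Complex.norm_real, Real.norm_eq_abs, abs_div, abs_pow, Nat.abs_cast]
  rw [← Finset.sum_div, ← Nat.cast_sum, burnside]
  push_cast
  ring

theorem Nat.ascFactorial_mul_le {m t : ℕ} (h : t ^ 2 ≤ m) :
    m.ascFactorial t * m ≤ m ^ t * (m + t ^ 2) := by
  induction t with
  | zero => simp
  | succ t ih =>
    -- expanded, this is `t³ ≤ m (t + 1)`, which follows from `t² < (t + 1)² ≤ m`
    have key : (m + t) * (m + t ^ 2) ≤ m * (m + (t + 1) ^ 2) := by nlinarith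
    calc m.ascFactorial (t + 1) * m = (m + t) * (m.ascFactorial t * m) := by
          rw [Nat.ascFactorial_succ]; ring
      _ ≤ (m + t) * (m ^ t * (m + t ^ 2)) :=
          Nat.mul_le_mul_left _ (ih (le_trans (by gcongr; omega) h))
      _ = m ^ t * ((m + t) * (m + t ^ 2)) := by ring
      _ ≤ m ^ t * (m * (m + (t + 1) ^ 2)) := Nat.mul_le_mul_left _ key
      _ = m ^ (t + 1) * (m + (t + 1) ^ 2) := by ring

theorem Nat.ascFactorial_div_pow_le {m t : ℕ} (h : t ^ 2 ≤ m) :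
    (m.ascFactorial t : ℝ) / m ^ t ≤ 1 + (t : ℝ) ^ 2 / m := by
  rcases Nat.eq_zero_or_pos m with rfl | hm
  · obtain rfl : t = 0 := by simpa using h
    simp
  have hm' : (0 : ℝ) < m := by exact_mod_cast hm
  rw [div_le_iff₀ (by positivity), ← mul_le_mul_iff_of_pos_right hm']
  calc (m.ascFactorial t : ℝ) * m ≤ m ^ t * (m + t ^ 2) := by
        exact_mod_cast Nat.ascFactorial_mul_le h
    _ = (1 + (t : ℝ) ^ 2 / m) * m ^ t * m := by field_simp

/-- For every `σ ∈ S_t`: `∑_{π∈S_t} |⟨ψ_σ|ψ_π⟩| = t!·dim(∨^t ℂ^{d^n})/d^{tn}`, and if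
`t² ≤ d^n` this sum is at most `1 + t²/d^n`. -/
theorem psi_overlap_sum (d n t : ℕ) (σ : Equiv.Perm (Fin t)) :
    (∑ π : Equiv.Perm (Fin t),
        ‖∑ p, (starRingEnd ℂ) (psiPerm d n t σ p) * psiPerm d n t π p‖)
      = (t.factorial : ℝ) * (Module.finrank ℂ (symSubspace (d ^ n) t) : ℝ) / (d : ℝ) ^ (t * n)
    ∧ (t ^ 2 ≤ d ^ n →
        (∑ π : Equiv.Perm (Fin t),
            ‖∑ p, (starRingEnd ℂ) (psiPerm d n t σ p) * psiPerm d n t π p‖)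
          ≤ 1 + (t : ℝ) ^ 2 / (d : ℝ) ^ n) := by
  rw [sum_norm_overlap_psiPerm, finrank_symSubspace]
  refine ⟨rfl, fun h => ?_⟩
  have hasc : (t.factorial * (d ^ n).multichoose t : ℝ) = (d ^ n).ascFactorial t := by
    rw [Nat.ascFactorial_eq_factorial_mul_choose', ← Nat.multichoose_eq, Nat.cast_mul]
  rw [hasc, pow_mul', ← Nat.cast_pow]
  exact Nat.ascFactorial_div_pow_le h
end

section
/- For any matrices A and B on ℂ^N with A Hermitian, ‖I + iεA − (ε²/2)B‖₁ = tr(I) + (ε²/2)(tr(A²) − tr(B)) + O(ε³) as ε → 0. -/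
open Matrix

/-- The trace norm (sum of singular values) of a square complex matrix. -/
noncomputable def traceNorm {ι : Type*} [Fintype ι] [DecidableEq ι] (A : Matrix ι ι ℂ) : ℝ :=
  ∑ i, Real.sqrt ((Matrix.isHermitian_conjTranspose_mul_self A).eigenvalues i)

/-!
The singular values of `M` are `√μᵢ`, where `μᵢ ≥ 0` are the eigenvalues of `Mᴴ M`, and
`0 ≤ (1 + μ)/2 - √μ = (1 - √μ)²/2 ≤ (μ - 1)²/2`. Summing, `‖M‖₁` agrees with
`(N + tr Mᴴ M)/2` up to `tr (Mᴴ M - 1)²/2`. For `M = 1 + iεA - (ε²/2)B` with `A` Hermitian the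
first-order terms of `Mᴴ M` cancel, so `Mᴴ M - 1 = ε² C + O(ε³)` with
`Re tr C = tr A² - Re tr B`; hence the error term is `O(ε⁴)` and
`(N + tr Mᴴ M)/2 = N + (ε²/2) Re tr C + O(ε³)`.
-/

open Topology Asymptotics

namespace Matrix.IsHermitian

variable {n 𝕜 : Type*} [RCLike 𝕜] [Fintype n] [DecidableEq n] {H : Matrix n n 𝕜}

lemma trace_cfc (hH : H.IsHermitian) (f : ℝ → ℝ) :
    (cfc f H).trace = ∑ i, (f (hH.eigenvalues i) : 𝕜) := by
  rw [cfc_eq hH f, IsHermitian.cfc, Unitary.conjStarAlgAut_apply, trace_mul_comm, ← mul_assoc,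
    Unitary.coe_star_mul_self, one_mul, trace_diagonal]
  rfl

lemma re_trace_sub_one_mul_sub_one (hH : H.IsHermitian) :
    RCLike.re ((H - 1) * (H - 1)).trace = ∑ i, (hH.eigenvalues i - 1) ^ 2 := by
  have hcfc : cfc (fun x : ℝ => (x - 1) ^ 2) H = (H - 1) * (H - 1) := by
    rw [cfc_pow _ _ _, cfc_sub _ _ _, cfc_id' ℝ H, cfc_const_one ℝ H, sq]
  rw [← hcfc, hH.trace_cfc, map_sum]
  simp only [RCLike.ofReal_re]

end Matrix.IsHermitian

lemma Real.abs_sqrt_sub_one_add_div_two_le {x : ℝ} (hx : 0 ≤ x) :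
    |√x - (1 + x) / 2| ≤ (x - 1) ^ 2 / 2 := by
  have hs : 0 ≤ √x := Real.sqrt_nonneg x
  have h2 : √x ^ 2 = x := Real.sq_sqrt hx
  rw [abs_le]
  constructor <;> nlinarith [sq_nonneg (√x - 1), mul_nonneg hs (sq_nonneg (√x - 1))]

theorem abs_traceNorm_sub_le {n : Type*} [Fintype n] [DecidableEq n] (M : Matrix n n ℂ) :
    |traceNorm M - (Fintype.card n + (Mᴴ * M).trace.re) / 2|
      ≤ ((Mᴴ * M - 1) * (Mᴴ * M - 1)).trace.re / 2 := by
  have hH := isHermitian_conjTranspose_mul_self M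
  have hmid : (Fintype.card n + (Mᴴ * M).trace.re) / 2 = ∑ i, (1 + hH.eigenvalues i) / 2 := by
    rw [hH.trace_eq_sum_eigenvalues, Complex.re_sum, ← Finset.sum_div, Finset.sum_add_distrib]
    simp
  rw [traceNorm, hmid, ← Finset.sum_sub_distrib,
    show ∀ K : Matrix n n ℂ, K.trace.re = RCLike.re K.trace from fun _ => rfl,
    hH.re_trace_sub_one_mul_sub_one, Finset.sum_div]
  exact (Finset.abs_sum_le_sum_abs _ _).trans <| Finset.sum_le_sum fun i _ =>
    Real.abs_sqrt_sub_one_add_div_two_le (eigenvalues_conjTranspose_mul_self_nonneg M i)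

lemma Asymptotics.isBigO_mul_of_continuous {α : Type*} [TopologicalSpace α] {g v : α → ℝ}
    (hv : Continuous v) (a : α) :
    (fun x => g x * v x) =O[𝓝 a] g := by
  simpa using (isBigO_refl g (𝓝 a)).mul ((hv.tendsto a).isBigO_one ℝ)

theorem conjTranspose_mul_self_one_add_smul_add_sq_smul {n : Type*} [Fintype n] [DecidableEq n]
    {X : Matrix n n ℂ} (hX : Xᴴ = -X) (Y : Matrix n n ℂ) (ε : ℝ) :
    (1 + ε • X + ε ^ 2 • Y)ᴴ * (1 + ε • X + ε ^ 2 • Y)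
      = 1 + ε ^ 2 • ((Y + Yᴴ - X * X) + ε • (Yᴴ * X - X * Y + ε • (Yᴴ * Y))) := by
  simp only [conjTranspose_add, conjTranspose_smul, conjTranspose_one, star_trivial, hX]
  simp only [mul_add, add_mul, one_mul, mul_one, smul_mul_assoc, mul_smul_comm, smul_smul,
    neg_mul, smul_neg, smul_add, smul_sub]
  module

theorem isBigO_traceNorm_sub_of_conjTranspose_mul_self_eq {n : Type*} [Fintype n]
    [DecidableEq n] {M G : ℝ → Matrix n n ℂ} (C : Matrix n n ℂ) (hG : Continuous G)
    (hM : ∀ ε, (M ε)ᴴ * M ε = 1 + ε ^ 2 • (C + ε • G ε)) :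
    (fun ε => traceNorm (M ε) - (Fintype.card n + ε ^ 2 / 2 * C.trace.re)) =O[𝓝 0]
      fun ε => ε ^ 3 := by
  set F : ℝ → Matrix n n ℂ := fun ε => C + ε • G ε
  have hsplit : ∀ ε, traceNorm (M ε) - (Fintype.card n + ε ^ 2 / 2 * C.trace.re)
      = (traceNorm (M ε) - (Fintype.card n + ((M ε)ᴴ * M ε).trace.re) / 2)
        + ε ^ 3 * ((G ε).trace.re / 2) := by
    intro ε
    simp only [hM, trace_add, trace_smul, trace_one, Complex.add_re, Complex.real_smul,
      Complex.natCast_re, Complex.re_ofReal_mul]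
    ring
  have hbound : ∀ ε, |traceNorm (M ε) - (Fintype.card n + ((M ε)ᴴ * M ε).trace.re) / 2|
      ≤ ε ^ 3 * (ε * ((F ε * F ε).trace.re / 2)) := by
    intro ε
    refine (abs_traceNorm_sub_le (M ε)).trans (le_of_eq ?_)
    rw [hM, add_sub_cancel_left, smul_mul_smul, trace_smul, Complex.real_smul,
      Complex.re_ofReal_mul]
    ring
  simp_rw [hsplit]
  refine IsBigO.add ?_ (isBigO_mul_of_continuous (by fun_prop) 0)
  refine (isBigO_of_le _ fun ε => ?_).trans
    (isBigO_mul_of_continuous (v := fun ε => ε * ((F ε * F ε).trace.re / 2)) (by fun_prop) 0)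
  exact (hbound ε).trans (le_abs_self _)

/-- For matrices `A, B` on `ℂ^N` with `A` Hermitian,
`‖I + iεA − (ε²/2)B‖₁ = tr(I) + (ε²/2)(tr(A²) − Re tr(B)) + O(ε³)` as `ε → 0`. -/
theorem traceNorm_expansion {N : ℕ} (A B : Matrix (Fin N) (Fin N) ℂ)
    (hA : A.IsHermitian) :
    Asymptotics.IsBigO (nhds (0 : ℝ))
      (fun ε : ℝ =>
        traceNorm ((1 : Matrix (Fin N) (Fin N) ℂ) + ((Complex.I * ε) • A)
            - (((ε ^ 2 / 2 : ℝ) : ℂ) • B))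
          - ((N : ℝ) + ε ^ 2 / 2 * ((Matrix.trace (A * A)).re - (Matrix.trace B).re)))
      (fun ε : ℝ => ε ^ 3) := by
  set X := Complex.I • A
  set Y := (-(1 / 2) : ℝ) • B
  have hX : Xᴴ = -X := by simp [X, hA.eq]
  have hM : ∀ ε : ℝ, (1 : Matrix (Fin N) (Fin N) ℂ) + ((Complex.I * ε) • A)
      - (((ε ^ 2 / 2 : ℝ) : ℂ) • B) = 1 + ε • X + ε ^ 2 • Y := by
    intro ε
    simp only [X, Y, ← Complex.coe_smul, smul_smul]
    push_cast
    module
  have hC : (Y + Yᴴ - X * X).trace.re = (A * A).trace.re - B.trace.re := by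
    have hXX : X * X = -(A * A) := by simp [X, smul_smul]
    simp only [hXX, Y, trace_sub, trace_add, trace_conjTranspose, trace_neg, trace_smul,
      Complex.sub_re, Complex.add_re, Complex.neg_re, RCLike.star_def, Complex.conj_re,
      Complex.smul_re, smul_eq_mul]
    ring
  simpa only [hM, Fintype.card_fin, hC] using
    isBigO_traceNorm_sub_of_conjTranspose_mul_self_eq (Y + Yᴴ - X * X) (by fun_prop)
      (conjTranspose_mul_self_one_add_smul_add_sq_smul hX Y)
end

section
/- Let ρ_Haar := ∫ (U⊗I)^{⊗t} Φ^{⊗t} ((U⊗I)^{⊗t})† dU, where Φ is the projector onto the maximally entangled state on ℂ^N⊗ℂ^N and the integral is over Haar measure on U(N). Then the support of ρ_Haar is contained in the symmetric subspace ∨^t(ℂ^N⊗ℂ^N), and the minimum eigenvalue of ρ_Haar restricted to its support is at least N^{−2t}. -/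
open Matrix Kronecker MeasureTheory

noncomputable instance matrixMeasurableSpace {ι κ : Type*} : MeasurableSpace (Matrix ι κ ℂ) :=
  (inferInstance : MeasurableSpace (ι → κ → ℂ))

/-- The `t`-fold tensor (Kronecker) power of a matrix with index set `α`. -/
def tpowA {α : Type*} (A : Matrix α α ℂ) (t : ℕ) :
    Matrix (Fin t → α) (Fin t → α) ℂ :=
  Matrix.of fun x y => ∏ i, A (x i) (y i)

/-- The projector `Φ` onto the maximally entangled state `|Φ_N⟩ = N^{−1/2}∑_i |i,i⟩`
on `ℂ^N ⊗ ℂ^N`. -/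
noncomputable def maxEnt (N : ℕ) : Matrix (Fin N × Fin N) (Fin N × Fin N) ℂ :=
  Matrix.of fun p q => if p.1 = p.2 ∧ q.1 = q.2 then ((N : ℂ))⁻¹ else 0

/-- `ρ_Haar = ∫ (U⊗I)^{⊗t} Φ^{⊗t} ((U⊗I)^{⊗t})† dμ(U)`, defined entrywise. -/
noncomputable def rhoHaar (N t : ℕ)
    (μ : Measure (Matrix.unitaryGroup (Fin N) ℂ)) :
    Matrix (Fin t → Fin N × Fin N) (Fin t → Fin N × Fin N) ℂ :=
  Matrix.of fun x y =>
    ∫ U, ((tpowA ((U : Matrix (Fin N) (Fin N) ℂ) ⊗ₖ (1 : Matrix (Fin N) (Fin N) ℂ)) t)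
        * tpowA (maxEnt N) t
        * (tpowA ((U : Matrix (Fin N) (Fin N) ℂ) ⊗ₖ (1 : Matrix (Fin N) (Fin N) ℂ)) t)ᴴ) x y ∂μ

/-- The symmetric subspace `∨^t (ℂ^N ⊗ ℂ^N)`, realized as functions on the product basis. -/
noncomputable def symSubspaceA (α : Type*) (t : ℕ) : Submodule ℂ ((Fin t → α) → ℂ) where
  carrier := {v | ∀ (π : Equiv.Perm (Fin t)) (x : Fin t → α), v (x ∘ π) = v x}
  add_mem' := by
    intro a b ha hb π x
    simp [ha π x, hb π x]
  zero_mem' := by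
    intro π x
    rfl
  smul_mem' := by
    intro c a ha π x
    simp [ha π x]

/-!
Write `ρ_Haar = ∫ R_U^{⊗t} dU` with `R_U = (U ⊗ I) Φ (U ⊗ I)† = N⁻¹ |vec Uᵀ⟩⟨vec Uᵀ|`. Since `R_U`
has rank one, every row of `ρ_Haar` is invariant under permuting the `t` tensor factors, which gives
the support statement.

For the eigenvalue bound, substitute `V ↦ UV` in `ρ_Haar² = ∫∫ R_U^{⊗t} R_V^{⊗t}` (left invariance):
`R_U R_{UV} = R_U (N⁻¹ tr V · I ⊗ V̄)`, so `ρ_Haar² = ρ_Haar B` with `B = I ⊗ F`,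
`F = N^{-t} Tr₁ M` and `M = ∫ U^{⊗t} ⊗ Ū^{⊗t} dU`. As `ρ_Haar` and `B` are Hermitian, `ρ_Haar`
agrees with `B` on its range, so it suffices that `B ≥ N^{-2t}`. Invariance makes `M` a Hermitian
idempotent, and unitarity makes it fix `vec I`; hence `M` dominates the rank-one projector onto
`vec I`, whose partial trace is `N^{-t} I`. Taking partial traces, `F ≥ N^{-2t} I`.
-/

open scoped ComplexOrder

section TensorPower

variable {α : Type*} {t : ℕ}

theorem tpowA_conjTranspose (A : Matrix α α ℂ) : tpowA Aᴴ t = (tpowA A t)ᴴ := by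
  ext x y
  simp [tpowA, star_prod]

theorem tpowA_map_conj (A : Matrix α α ℂ) :
    tpowA (A.map (starRingEnd ℂ)) t = (tpowA A t).map (starRingEnd ℂ) := by
  ext x y
  simp [tpowA]

theorem tpowA_smul (c : ℂ) (A : Matrix α α ℂ) : tpowA (c • A) t = c ^ t • tpowA A t := by
  ext x y
  simp [tpowA, Finset.prod_mul_distrib]

theorem tpowA_vecMulVec_apply_comp_perm (a b : α → ℂ) (π : Equiv.Perm (Fin t))
    (x y : Fin t → α) : tpowA (vecMulVec a b) t (x ∘ π) y = tpowA (vecMulVec a b) t x y := by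
  simp only [tpowA, of_apply, vecMulVec_apply, Finset.prod_mul_distrib, Function.comp_apply,
    Equiv.prod_comp π fun i => a (x i)]

theorem tpowA_one [DecidableEq α] : tpowA (1 : Matrix α α ℂ) t = 1 := by
  ext x y
  by_cases hxy : x = y
  · subst hxy
    simp [tpowA]
  · obtain ⟨i, hi⟩ := Function.ne_iff.mp hxy
    simp only [tpowA, of_apply, one_apply_ne hxy]
    exact Finset.prod_eq_zero (Finset.mem_univ i) (one_apply_ne hi)

theorem tpowA_kronecker {β : Type*} (A : Matrix α α ℂ) (B : Matrix β β ℂ) :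
    tpowA (A ⊗ₖ B) t = (tpowA A t ⊗ₖ tpowA B t).submatrix
      (Equiv.arrowProdEquivProdArrow _ _ _) (Equiv.arrowProdEquivProdArrow _ _ _) := by
  ext x y
  simp [tpowA, Equiv.arrowProdEquivProdArrow, Finset.prod_mul_distrib]

variable [Fintype α]

theorem tpowA_mul (A B : Matrix α α ℂ) : tpowA (A * B) t = tpowA A t * tpowA B t := by
  ext x y
  simp only [tpowA, of_apply, mul_apply, Fintype.prod_sum, Finset.prod_mul_distrib]

theorem trace_tpowA (A : Matrix α α ℂ) : (tpowA A t).trace = A.trace ^ t := by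
  simp only [trace, diag, tpowA, of_apply]
  rw [← Fin.prod_const, Fintype.prod_sum]

theorem tpowA_mul_conjTranspose_self [DecidableEq α] {U : Matrix α α ℂ}
    (hU : U ∈ unitaryGroup α ℂ) : tpowA U t * (tpowA U t)ᴴ = 1 := by
  rw [← tpowA_conjTranspose, ← tpowA_mul, ← star_eq_conjTranspose,
    mem_unitaryGroup_iff.mp hU, tpowA_one]

end TensorPower

namespace Matrix

variable {ι κ R : Type*}

def partialTrace [Fintype ι] [AddCommMonoid R] (M : Matrix (ι × κ) (ι × κ) R) : Matrix κ κ R :=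
  ∑ i, M.submatrix (Prod.mk i) (Prod.mk i)

theorem partialTrace_apply [Fintype ι] [AddCommMonoid R] (M : Matrix (ι × κ) (ι × κ) R)
    (c d : κ) : partialTrace M c d = ∑ i, M (i, c) (i, d) := by
  simp [partialTrace, Matrix.sum_apply]

theorem partialTrace_sub [Fintype ι] [AddCommGroup R] (M N : Matrix (ι × κ) (ι × κ) R) :
    partialTrace (M - N) = partialTrace M - partialTrace N := by
  simp [partialTrace, submatrix_sub]

theorem partialTrace_smul [Fintype ι] [Semiring R] (c : R) (M : Matrix (ι × κ) (ι × κ) R) :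
    partialTrace (c • M) = c • partialTrace M := by
  simp [partialTrace, submatrix_smul, Finset.smul_sum]

theorem partialTrace_kronecker [Fintype ι] [Semiring R] (A : Matrix ι ι R) (B : Matrix κ κ R) :
    partialTrace (A ⊗ₖ B) = A.trace • B := by
  ext c d
  simp [partialTrace_apply, trace, Finset.sum_mul]

theorem partialTrace_vecMulVec_vec [Fintype ι] [Semiring R] [StarRing R] (A B : Matrix κ ι R) :
    partialTrace (vecMulVec (vec A) (star (vec B))) = A * Bᴴ := by
  ext c d
  simp [partialTrace_apply, mul_apply, vec, vecMulVec_apply]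

theorem PosSemidef.partialTrace [Fintype ι] [CommRing R] [PartialOrder R] [StarRing R]
    [IsOrderedAddMonoid R] {M : Matrix (ι × κ) (ι × κ) R} (hM : M.PosSemidef) :
    (partialTrace M).PosSemidef :=
  posSemidef_sum _ fun i _ => hM.submatrix (Prod.mk i)

theorem posSemidef_sub_of_mul_eq [Fintype ι] [CommRing R] [PartialOrder R] [StarRing R]
    [StarOrderedRing R] {M P : Matrix ι ι R} (hM : M.IsHermitian) (hMM : M * M = M)
    (hP : P.IsHermitian) (hPP : P * P = P) (hMP : M * P = P) : (M - P).PosSemidef := by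
  have hPM : P * M = P := by
    simpa [hM.eq, hP.eq] using congrArg conjTranspose hMP
  have hsq : (M - P)ᴴ * (M - P) = M - P := by
    rw [conjTranspose_sub, hM.eq, hP.eq]
    simp only [sub_mul, mul_sub, hMM, hMP, hPM, hPP, sub_self, sub_zero]
  exact hsq ▸ posSemidef_conjTranspose_mul_self (M - P)

theorem posSemidef_sub_smul_vecMulVec [Fintype ι] {M : Matrix ι ι ℂ} (hM : M.IsHermitian)
    (hMM : M * M = M) {x : ι → ℂ} (hx : M * vecMulVec x (star x) = vecMulVec x (star x)) :
    (M - (star x ⬝ᵥ x)⁻¹ • vecMulVec x (star x)).PosSemidef := by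
  refine posSemidef_sub_of_mul_eq hM hMM ?_ ?_ (by rw [Matrix.mul_smul, hx])
  · have hr : star (star x ⬝ᵥ x) = star x ⬝ᵥ x := by
      rw [← star_dotProduct_star, star_star, dotProduct_comm]
    simp [IsHermitian, conjTranspose_smul, hr]
  · rw [smul_mul_smul_comm, vecMulVec_mul_vecMulVec, vecMulVec_smul, smul_smul, mul_right_comm]
    simpa using congrArg (· • vecMulVec x (star x)) (mul_inv_mul_cancel (star x ⬝ᵥ x)⁻¹)

theorem mul_vecMulVec_star_mul_conjTranspose [Fintype ι] [Fintype κ] (A : Matrix ι κ ℂ)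
    (x : κ → ℂ) : A * vecMulVec x (star x) * Aᴴ = vecMulVec (A *ᵥ x) (star (A *ᵥ x)) := by
  rw [mul_vecMulVec, vecMulVec_mul, vecMul_conjTranspose, star_star]

theorem le_re_dotProduct_mulVec_of_mem_range [Fintype ι] [DecidableEq ι] {ρ B : Matrix ι ι ℂ}
    {c : ℝ} (hρ : ρ.IsHermitian) (hB : (B - (c : ℂ) • 1).PosSemidef) (hρB : ρ * ρ = ρ * B)
    {v : ι → ℂ} (hv : v ∈ LinearMap.range ρ.mulVecLin) :
    c * (star v ⬝ᵥ v).re ≤ (star v ⬝ᵥ ρ *ᵥ v).re := by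
  obtain ⟨w, rfl⟩ := hv
  have hc : ((c : ℂ) • (1 : Matrix ι ι ℂ)).IsHermitian := by
    simp [IsHermitian]
  have hBh : B.IsHermitian := by
    simpa using hB.isHermitian.add hc
  have hBρ : B * ρ = ρ * ρ := by
    simpa [hρ.eq, hBh.eq] using (congrArg conjTranspose hρB).symm
  have hρv : ρ *ᵥ (ρ *ᵥ w) = B *ᵥ (ρ *ᵥ w) := by
    rw [mulVec_mulVec, mulVec_mulVec, hBρ]
  have hnonneg := hB.dotProduct_mulVec_nonneg (ρ.mulVecLin w)
  rw [sub_mulVec, smul_mulVec, one_mulVec, dotProduct_sub, dotProduct_smul] at hnonneg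
  simp only [mulVecLin_apply, hρv] at hnonneg ⊢
  have := (Complex.nonneg_iff.mp hnonneg).1
  simp only [Complex.sub_re, smul_eq_mul, Complex.re_ofReal_mul] at this
  linarith

theorem star_vec_transpose_dotProduct_vec_mul_transpose {n : Type*} [Fintype n] [DecidableEq n]
    {U : Matrix n n ℂ} (hU : U ∈ unitaryGroup n ℂ) (V : Matrix n n ℂ) :
    star (vec Uᵀ) ⬝ᵥ vec (U * V)ᵀ = V.trace := by
  have h : Uᵀᴴ = Uᴴᵀ := rfl
  rw [star_vec_dotProduct_vec, h, ← transpose_mul, trace_transpose, trace_mul_comm,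
    ← Matrix.mul_assoc, ← star_eq_conjTranspose, mem_unitaryGroup_iff'.mp hU, Matrix.one_mul]

theorem star_vec_mul_transpose_eq_vecMul {n : Type*} [Fintype n] [DecidableEq n]
    (U V : Matrix n n ℂ) :
    star (vec (U * V)ᵀ) = star (vec Uᵀ) ᵥ* (1 ⊗ₖ V.map (starRingEnd ℂ)) := by
  rw [transpose_mul, vec_mul_eq_mulVec, star_mulVec, conjTranspose_kronecker, conjTranspose_one]
  rfl

end Matrix

section Continuity

variable {X : Type*} [TopologicalSpace X]

@[fun_prop]
theorem Continuous.matrix_kronecker {l m n p : Type*} {A : X → Matrix l m ℂ}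
    {B : X → Matrix n p ℂ} (hA : Continuous A) (hB : Continuous B) :
    Continuous fun x => A x ⊗ₖ B x :=
  continuous_matrix fun _ _ => (hA.matrix_elem _ _).mul (hB.matrix_elem _ _)

@[fun_prop]
theorem Continuous.tpowA {α : Type*} {t : ℕ} {A : X → Matrix α α ℂ} (hA : Continuous A) :
    Continuous fun x => tpowA (A x) t :=
  continuous_matrix fun _ _ => by
    simpa only [_root_.tpowA, of_apply] using
      continuous_finsetProd _ fun _ _ => hA.matrix_elem _ _

end Continuity

-- `matrixMeasurableSpace` is the product σ-algebra, which is the Borel one.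
instance {m n : Type*} [Fintype m] [Fintype n] : BorelSpace (Matrix m n ℂ) :=
  inferInstanceAs (BorelSpace (m → n → ℂ))

instance {n : Type*} [Fintype n] [DecidableEq n] : CompactSpace (unitaryGroup n ℂ) := by
  have hclosed : IsClosed (unitaryGroup n ℂ : Set (Matrix n n ℂ)) := isClosed_unitary
  refine isCompact_iff_compactSpace.mp
    (Metric.isCompact_of_isClosed_isBounded (α := n → n → ℂ) hclosed ?_)
  refine (Metric.isBounded_iff_subset_closedBall 0).2 ⟨1, fun U hU => ?_⟩
  simpa [pi_norm_le_iff_of_nonneg] using entry_norm_bound_of_unitary hU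

section MatrixIntegral

variable {G : Type*} [MeasurableSpace G] {l m p : Type*}

noncomputable def matrixIntegral (μ : Measure G) (f : G → Matrix m p ℂ) : Matrix m p ℂ :=
  of fun i j => ∫ g, f g i j ∂μ

variable (μ : Measure G)

theorem conjTranspose_matrixIntegral (f : G → Matrix m p ℂ) :
    (matrixIntegral μ f)ᴴ = matrixIntegral μ fun g => (f g)ᴴ := by
  ext i j
  simp [matrixIntegral, ← integral_conj]

theorem matrixIntegral_submatrix {l' m' : Type*} (f : G → Matrix m p ℂ) (r : l' → m)
    (c : m' → p) :
    (matrixIntegral μ f).submatrix r c = matrixIntegral μ fun g => (f g).submatrix r c :=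
  rfl

theorem smul_matrixIntegral (c : ℂ) (f : G → Matrix m p ℂ) :
    c • matrixIntegral μ f = matrixIntegral μ fun g => c • f g := by
  ext i j
  simp [matrixIntegral, integral_const_mul]

theorem kronecker_matrixIntegral {l' m' : Type*} (A : Matrix l' m' ℂ) (f : G → Matrix m p ℂ) :
    A ⊗ₖ matrixIntegral μ f = matrixIntegral μ fun g => A ⊗ₖ f g := by
  ext i j
  simp [matrixIntegral, integral_const_mul]

theorem matrixIntegral_const [IsProbabilityMeasure μ] (A : Matrix m p ℂ) :
    matrixIntegral μ (fun _ => A) = A := by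
  ext i j
  simp [matrixIntegral]

theorem matrixIntegral_comp_mul_left [Group G] [MeasurableMul G] [μ.IsMulLeftInvariant]
    (f : G → Matrix m p ℂ) (h : G) :
    matrixIntegral μ (fun g => f (h * g)) = matrixIntegral μ f := by
  ext i j
  exact integral_mul_left_eq_self (fun g => f g i j) h

theorem matrixIntegral_comp_inv [Group G] [MeasurableInv G] [μ.IsInvInvariant]
    (f : G → Matrix m p ℂ) : matrixIntegral μ (fun g => f g⁻¹) = matrixIntegral μ f := by
  ext i j
  exact integral_inv_eq_self (fun g => f g i j) μ

theorem conjTranspose_matrixIntegral_of_map_inv [Group G] [MeasurableInv G] [μ.IsInvInvariant]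
    {σ : G → Matrix m m ℂ} (hinv : ∀ g, σ g⁻¹ = (σ g)ᴴ) :
    (matrixIntegral μ σ)ᴴ = matrixIntegral μ σ := by
  rw [conjTranspose_matrixIntegral]
  simp_rw [← hinv]
  exact matrixIntegral_comp_inv μ σ

variable [TopologicalSpace G] [CompactSpace G] [OpensMeasurableSpace G] [IsFiniteMeasure μ]
  {f : G → Matrix m p ℂ}

theorem Continuous.integrable_matrix_elem (hf : Continuous f) (i : m) (j : p) :
    Integrable (fun g => f g i j) μ :=
  (hf.matrix_elem i j).integrable_of_hasCompactSupport (.of_compactSpace _)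

theorem matrixIntegral_mul [Fintype p] (hf : Continuous f) (A : Matrix p l ℂ) :
    matrixIntegral μ f * A = matrixIntegral μ fun g => f g * A := by
  ext i j
  simp only [matrixIntegral, mul_apply, of_apply, ← integral_mul_const]
  exact (integral_finsetSum _ fun k _ => (hf.integrable_matrix_elem μ i k).mul_const _).symm

theorem mul_matrixIntegral [Fintype m] (hf : Continuous f) (A : Matrix l m ℂ) :
    A * matrixIntegral μ f = matrixIntegral μ fun g => A * f g := by
  ext i j
  simp only [matrixIntegral, mul_apply, of_apply, ← integral_const_mul]
  exact (integral_finsetSum _ fun k _ => (hf.integrable_matrix_elem μ k j).const_mul _).symm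

theorem partialTrace_matrixIntegral {ι κ : Type*} [Fintype ι]
    {f : G → Matrix (ι × κ) (ι × κ) ℂ} (hf : Continuous f) :
    partialTrace (matrixIntegral μ f) = matrixIntegral μ fun g => partialTrace (f g) := by
  ext c d
  simp only [partialTrace_apply, matrixIntegral, of_apply]
  exact (integral_finsetSum _ fun i _ => hf.integrable_matrix_elem μ _ _).symm

theorem matrixIntegral_mul_self_of_map_mul [Group G] [MeasurableMul G] [IsProbabilityMeasure μ]
    [μ.IsMulLeftInvariant] [Fintype m] {σ : G → Matrix m m ℂ} (hσ : Continuous σ)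
    (hmul : ∀ g h, σ (g * h) = σ g * σ h) :
    matrixIntegral μ σ * matrixIntegral μ σ = matrixIntegral μ σ := by
  calc matrixIntegral μ σ * matrixIntegral μ σ
      = matrixIntegral μ fun g => matrixIntegral μ fun h => σ g * σ h := by
        simp_rw [matrixIntegral_mul μ hσ, mul_matrixIntegral μ hσ]
    _ = matrixIntegral μ fun _ => matrixIntegral μ σ := by
        simp_rw [← hmul, matrixIntegral_comp_mul_left]
    _ = matrixIntegral μ σ := matrixIntegral_const μ _

end MatrixIntegral

section MaxEnt

variable {N : ℕ}

theorem maxEnt_eq_smul_vecMulVec :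
    maxEnt N = (N : ℂ)⁻¹ • vecMulVec (vec 1) (star (vec 1)) := by
  ext p q
  by_cases hp : p.1 = p.2 <;> by_cases hq : q.1 = q.2 <;>
    simp [maxEnt, vecMulVec_apply, vec, one_apply, hp, hq, eq_comm]

noncomputable def rotatedMaxEnt (U : Matrix (Fin N) (Fin N) ℂ) :
    Matrix (Fin N × Fin N) (Fin N × Fin N) ℂ :=
  (U ⊗ₖ 1) * maxEnt N * (U ⊗ₖ 1)ᴴ

@[fun_prop]
theorem continuous_rotatedMaxEnt : Continuous (rotatedMaxEnt (N := N)) := by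
  unfold rotatedMaxEnt
  fun_prop

-- Mathlib's `vec` stacks columns, `vec A (j, i) = A i j`; so `vec Uᵀ p = U p.1 p.2`.
theorem rotatedMaxEnt_eq (U : Matrix (Fin N) (Fin N) ℂ) :
    rotatedMaxEnt U = (N : ℂ)⁻¹ • vecMulVec (vec Uᵀ) (star (vec Uᵀ)) := by
  rw [rotatedMaxEnt, maxEnt_eq_smul_vecMulVec, Matrix.mul_smul, Matrix.smul_mul,
    mul_vecMulVec_star_mul_conjTranspose, kronecker_mulVec_vec]
  simp

theorem rotatedMaxEnt_isHermitian (U : Matrix (Fin N) (Fin N) ℂ) :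
    (rotatedMaxEnt U).IsHermitian := by
  rw [rotatedMaxEnt_eq]
  simp [IsHermitian, conjTranspose_smul]

theorem rotatedMaxEnt_mul_rotatedMaxEnt_mul {U : Matrix (Fin N) (Fin N) ℂ}
    (hU : U ∈ unitaryGroup (Fin N) ℂ) (V : Matrix (Fin N) (Fin N) ℂ) :
    rotatedMaxEnt U * rotatedMaxEnt (U * V)
      = rotatedMaxEnt U * (((N : ℂ)⁻¹ * V.trace) • (1 ⊗ₖ V.map (starRingEnd ℂ))) := by
  rw [rotatedMaxEnt_eq, rotatedMaxEnt_eq, smul_mul_smul_comm, smul_mul_smul_comm,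
    vecMulVec_mul_vecMulVec, vecMulVec_mul, star_vec_transpose_dotProduct_vec_mul_transpose hU,
    star_vec_mul_transpose_eq_vecMul, vecMulVec_smul, smul_smul]
  ring_nf

end MaxEnt

section Haar

variable {N t : ℕ} (μ : Measure (unitaryGroup (Fin N) ℂ))

theorem rhoHaar_eq_matrixIntegral :
    rhoHaar N t μ = matrixIntegral μ fun U => tpowA (rotatedMaxEnt U.1) t := by
  simp only [rotatedMaxEnt, tpowA_mul, tpowA_conjTranspose]
  rfl

theorem rhoHaar_apply_comp_perm (π : Equiv.Perm (Fin t)) (x y : Fin t → Fin N × Fin N) :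
    rhoHaar N t μ (x ∘ π) y = rhoHaar N t μ x y := by
  simp only [rhoHaar_eq_matrixIntegral, matrixIntegral, of_apply, rotatedMaxEnt_eq,
    ← smul_vecMulVec, tpowA_vecMulVec_apply_comp_perm]

theorem rhoHaar_isHermitian : (rhoHaar N t μ).IsHermitian := by
  rw [IsHermitian, rhoHaar_eq_matrixIntegral, conjTranspose_matrixIntegral]
  simp_rw [← tpowA_conjTranspose, (rotatedMaxEnt_isHermitian _).eq]

noncomputable def momentOperator (μ : Measure (unitaryGroup (Fin N) ℂ)) (t : ℕ) :
    Matrix ((Fin t → Fin N) × (Fin t → Fin N)) ((Fin t → Fin N) × (Fin t → Fin N)) ℂ :=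
  matrixIntegral μ fun U =>
    tpowA U.1 t ⊗ₖ (tpowA U.1 t).map (starRingEnd ℂ)

noncomputable def reducedMoment (μ : Measure (unitaryGroup (Fin N) ℂ)) (t : ℕ) :
    Matrix (Fin t → Fin N) (Fin t → Fin N) ℂ :=
  ((N : ℂ) ^ t)⁻¹ • partialTrace (momentOperator μ t)

theorem momentOperator_isHermitian [μ.IsInvInvariant] : (momentOperator μ t).IsHermitian :=
  conjTranspose_matrixIntegral_of_map_inv μ fun U => by
    ext p q
    simp [tpowA, star_prod]

theorem momentOperator_mul_self [IsProbabilityMeasure μ] [μ.IsMulLeftInvariant] :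
    momentOperator μ t * momentOperator μ t = momentOperator μ t :=
  matrixIntegral_mul_self_of_map_mul μ (by fun_prop) fun U V => by
    simp [tpowA_mul, Matrix.map_mul, mul_kronecker_mul]

theorem momentOperator_mul_vecMulVec_vec_one [IsProbabilityMeasure μ] :
    momentOperator μ t * vecMulVec (vec 1) (star (vec 1))
      = vecMulVec (vec 1) (star (vec 1)) := by
  rw [momentOperator, matrixIntegral_mul μ (by fun_prop)]
  conv_rhs => rw [← matrixIntegral_const μ (vecMulVec (vec 1) (star (vec 1)))]
  congr 1
  funext U
  have hconj : (tpowA U.1 t).map (starRingEnd ℂ) * (tpowA U.1 t)ᵀ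
      = (tpowA U.1 t * (tpowA U.1 t)ᴴ)ᵀ := by
    rw [transpose_mul]
    rfl
  rw [mul_vecMulVec, kronecker_mulVec_vec, Matrix.mul_one, hconj,
    tpowA_mul_conjTranspose_self U.2, transpose_one]

theorem momentOperator_sub_posSemidef [IsProbabilityMeasure μ] [μ.IsMulLeftInvariant]
    [μ.IsInvInvariant] :
    (momentOperator μ t - ((N : ℂ) ^ t)⁻¹ • vecMulVec (vec 1) (star (vec 1))).PosSemidef := by
  have hcard :
      star (vec 1) ⬝ᵥ vec (1 : Matrix (Fin t → Fin N) (Fin t → Fin N) ℂ) = (N : ℂ) ^ t := by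
    simp [star_vec_dotProduct_vec]
  simpa [hcard] using posSemidef_sub_smul_vecMulVec (momentOperator_isHermitian (t := t) μ)
    (momentOperator_mul_self μ) (momentOperator_mul_vecMulVec_vec_one μ)

theorem reducedMoment_sub_posSemidef [IsProbabilityMeasure μ] [μ.IsMulLeftInvariant]
    [μ.IsInvInvariant] : (reducedMoment μ t - ((N : ℂ) ^ t)⁻¹ ^ 2 • 1).PosSemidef := by
  have h : reducedMoment μ t - ((N : ℂ) ^ t)⁻¹ ^ 2 • 1 = ((N : ℂ) ^ t)⁻¹ •
      partialTrace (momentOperator μ t - ((N : ℂ) ^ t)⁻¹ • vecMulVec (vec 1) (star (vec 1))) := by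
    rw [partialTrace_sub, partialTrace_smul, partialTrace_vecMulVec_vec, reducedMoment, smul_sub,
      smul_smul, conjTranspose_one, Matrix.mul_one, sq]
  rw [h]
  exact (momentOperator_sub_posSemidef (t := t) μ).partialTrace.smul (by positivity)

/-- `I ⊗ F` on `(ℂ^N ⊗ ℂ^N)^{⊗t} ≅ (ℂ^N)^{⊗t} ⊗ (ℂ^N)^{⊗t}`, the identity acting on the factors
rotated by `U`. -/
noncomputable def idKroneckerReducedMoment (μ : Measure (unitaryGroup (Fin N) ℂ)) (t : ℕ) :
    Matrix (Fin t → Fin N × Fin N) (Fin t → Fin N × Fin N) ℂ :=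
  ((1 : Matrix (Fin t → Fin N) (Fin t → Fin N) ℂ) ⊗ₖ reducedMoment μ t).submatrix
    (Equiv.arrowProdEquivProdArrow _ _ _) (Equiv.arrowProdEquivProdArrow _ _ _)

theorem idKroneckerReducedMoment_eq_matrixIntegral [IsFiniteMeasure μ] :
    idKroneckerReducedMoment μ t = matrixIntegral μ fun V =>
      tpowA (((N : ℂ)⁻¹ * V.1.trace) • (1 ⊗ₖ V.1.map (starRingEnd ℂ))) t := by
  rw [idKroneckerReducedMoment, reducedMoment, momentOperator,
    partialTrace_matrixIntegral μ (by fun_prop), smul_matrixIntegral, kronecker_matrixIntegral,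
    matrixIntegral_submatrix]
  congr 1
  funext V
  rw [tpowA_smul, tpowA_kronecker, tpowA_one, partialTrace_kronecker, trace_tpowA,
    tpowA_map_conj, smul_smul, kronecker_smul, mul_pow, inv_pow]
  rfl

theorem tpowA_rotatedMaxEnt_mul_rhoHaar [IsFiniteMeasure μ] [μ.IsMulLeftInvariant]
    (U : unitaryGroup (Fin N) ℂ) :
    tpowA (rotatedMaxEnt U.1) t * rhoHaar N t μ
      = tpowA (rotatedMaxEnt U.1) t * idKroneckerReducedMoment μ t := by
  calc tpowA (rotatedMaxEnt U.1) t * rhoHaar N t μ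
      = matrixIntegral μ fun V =>
          tpowA (rotatedMaxEnt U.1) t * tpowA (rotatedMaxEnt (U * V).1) t := by
        rw [rhoHaar_eq_matrixIntegral, mul_matrixIntegral μ (by fun_prop)]
        exact (matrixIntegral_comp_mul_left μ (fun V => _) U).symm
    _ = matrixIntegral μ fun V => tpowA (rotatedMaxEnt U.1) t * tpowA (((N : ℂ)⁻¹
          * V.1.trace) • (1 ⊗ₖ V.1.map (starRingEnd ℂ))) t := by
        simp_rw [← tpowA_mul, UnitaryGroup.mul_val, rotatedMaxEnt_mul_rotatedMaxEnt_mul U.2]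
    _ = tpowA (rotatedMaxEnt U.1) t * idKroneckerReducedMoment μ t := by
        rw [idKroneckerReducedMoment_eq_matrixIntegral, mul_matrixIntegral μ (by fun_prop)]

theorem rhoHaar_mul_self [IsFiniteMeasure μ] [μ.IsMulLeftInvariant] :
    rhoHaar N t μ * rhoHaar N t μ = rhoHaar N t μ * idKroneckerReducedMoment μ t := by
  have hcont : Continuous fun U : unitaryGroup (Fin N) ℂ => tpowA (rotatedMaxEnt U.1) t := by
    fun_prop
  have hmul : ∀ A, rhoHaar N t μ * A = matrixIntegral μ fun U => tpowA (rotatedMaxEnt U.1) t * A :=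
    fun A => by rw [rhoHaar_eq_matrixIntegral, matrixIntegral_mul μ hcont]
  rw [hmul, hmul]
  simp_rw [tpowA_rotatedMaxEnt_mul_rhoHaar]

theorem idKroneckerReducedMoment_sub_posSemidef [IsProbabilityMeasure μ] [μ.IsMulLeftInvariant]
    [μ.IsInvInvariant] : (idKroneckerReducedMoment μ t - ((N : ℂ) ^ t)⁻¹ ^ 2 • 1).PosSemidef := by
  have h : idKroneckerReducedMoment μ t - ((N : ℂ) ^ t)⁻¹ ^ 2 • 1
      = (1 ⊗ₖ (reducedMoment μ t - ((N : ℂ) ^ t)⁻¹ ^ 2 • 1)).submatrix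
          (Equiv.arrowProdEquivProdArrow _ _ _) (Equiv.arrowProdEquivProdArrow _ _ _) := by
    rw [idKroneckerReducedMoment, ← submatrix_one_equiv (Equiv.arrowProdEquivProdArrow _ _ _)]
    ext x y
    simp [one_apply, mul_sub, funext_iff, Prod.ext_iff, forall_and, ← ite_and, and_comm]
  rw [h]
  exact (PosSemidef.one.kronecker (reducedMoment_sub_posSemidef μ)).submatrix _

end Haar

theorem mulVec_mem_symSubspaceA {α : Type*} [Fintype α] {t : ℕ}
    {M : Matrix (Fin t → α) (Fin t → α) ℂ}
    (hM : ∀ (π : Equiv.Perm (Fin t)) (x y : Fin t → α), M (x ∘ π) y = M x y)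
    (w : (Fin t → α) → ℂ) : M *ᵥ w ∈ symSubspaceA α t := fun π x => by
  simp only [mulVec, dotProduct, hM]

theorem rhoHaar_support_min_eigenvalue_general {N t : ℕ}
    (μ : Measure (Matrix.unitaryGroup (Fin N) ℂ)) [IsProbabilityMeasure μ]
    (hleft : ∀ V : Matrix.unitaryGroup (Fin N) ℂ, μ.map (fun U => V * U) = μ)
    (hinv : μ.map (fun U => U⁻¹) = μ) :
    (∀ v ∈ LinearMap.range (Matrix.mulVecLin (rhoHaar N t μ)),
        v ∈ symSubspaceA (Fin N × Fin N) t)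
    ∧ ∀ v ∈ LinearMap.range (Matrix.mulVecLin (rhoHaar N t μ)),
        ((N : ℝ) ^ (2 * t))⁻¹ * (dotProduct (star v) v).re
          ≤ (dotProduct (star v) ((rhoHaar N t μ).mulVec v)).re := by
  have : μ.IsMulLeftInvariant := ⟨hleft⟩
  have : μ.IsInvInvariant := ⟨hinv⟩
  refine ⟨?_, fun v hv => ?_⟩
  · rintro v ⟨w, rfl⟩
    exact mulVec_mem_symSubspaceA (rhoHaar_apply_comp_perm μ) w
  · have hc : ((((N : ℝ) ^ (2 * t))⁻¹ : ℝ) : ℂ) = ((N : ℂ) ^ t)⁻¹ ^ 2 := by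
      push_cast
      ring
    exact le_re_dotProduct_mulVec_of_mem_range (rhoHaar_isHermitian μ)
      (hc ▸ idKroneckerReducedMoment_sub_posSemidef μ) (rhoHaar_mul_self μ) hv

/-- For `μ` the Haar probability measure on `U(N)`: the support of `ρ_Haar` is contained in the
symmetric subspace `∨^t(ℂ^N⊗ℂ^N)`, and the minimum eigenvalue of `ρ_Haar` restricted to its
support is at least `N^{−2t}` (every `v` in the range satisfies
`⟨v, ρ_Haar v⟩ ≥ N^{−2t}‖v‖²`). -/
theorem rhoHaar_support_min_eigenvalue {N t : ℕ}
    (μ : Measure (Matrix.unitaryGroup (Fin N) ℂ)) [IsProbabilityMeasure μ]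
    (hleft : ∀ V : Matrix.unitaryGroup (Fin N) ℂ, μ.map (fun U => V * U) = μ)
    (hright : ∀ V : Matrix.unitaryGroup (Fin N) ℂ, μ.map (fun U => U * V) = μ)
    (hinv : μ.map (fun U => U⁻¹) = μ) :
    (∀ v ∈ LinearMap.range (Matrix.mulVecLin (rhoHaar N t μ)),
        v ∈ symSubspaceA (Fin N × Fin N) t)
    ∧ ∀ v ∈ LinearMap.range (Matrix.mulVecLin (rhoHaar N t μ)),
        ((N : ℝ) ^ (2 * t))⁻¹ * (dotProduct (star v) v).re
          ≤ (dotProduct (star v) ((rhoHaar N t μ).mulVec v)).re :=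
  rhoHaar_support_min_eigenvalue_general μ hleft hinv
end
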